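/- Let T ≥ 1, and let ζ_1,…,ζ_T ∈ ℝ^n and z_1,…,z_T ∈ ℝ^m be given data vectors. Define Φ = (1/T)∑_{t=1}^T ζ_t ζ_tᵀ, Ψ = (1/T)∑_{t=1}^T ζ_t z_tᵀ, Σ = (1/T)∑_{t=1}^T z_t z_tᵀ. Let P ∈ ℝ^{m×m} be symmetric positive semidefinite, assume Σ_P := Σ + (1/T)P is positive definite and that Π_P* := Φ − Ψ Σ_P⁻¹ Ψᵀ is positive definite. Then the penalized objective L_P(Γ,Π) := −T·log det Π − ∑_{t=1}^T (ζ_t − Γ z_t)ᵀ Π⁻¹ (ζ_t − Γ z_t) − tr(Π⁻¹ Γ P Γᵀ), over Γ ∈ ℝ^{n×m} and symmetric positive definite Π ∈ ℝ^{n×n}, attains its maximum uniquely at Γ = Ψ Σ_P⁻¹ and Π = Π_P*. -/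

import Mathlib

/-!
With `Γ* = Ψ Σ_P⁻¹`, completing the square in `Γ` gives
`L_P(Γ, Π) = -T (log det Π + tr(Π⁻¹ Π_P*) + tr(Π⁻¹ (Γ - Γ*) Σ_P (Γ - Γ*)ᵀ))`.
The last trace is nonnegative and vanishes only at `Γ = Γ*`. For the rest, write `Π_P* = S²`
with `S` positive definite and `X = S Π⁻¹ S`: then
`log det Π + tr(Π⁻¹ Π_P*) - log det Π_P* - n = tr X - log det X - n = ∑ (λᵢ - log λᵢ - 1) ≥ 0`
over the eigenvalues `λᵢ > 0` of `X`, with equality only if `X = 1`, i.e. `Π = Π_P*`.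
-/

open Matrix

/-- Up to an additive constant, twice the negative log-likelihood per sample of a centred
Gaussian with covariance `Q`, given the second-moment matrix `M` of the sample. -/
noncomputable def gaussianNLL {n : Type*} [Fintype n] [DecidableEq n] (Q M : Matrix n n ℝ) : ℝ :=
  Real.log Q.det + (Q⁻¹ * M).trace

lemma gaussianNLL_add {n : Type*} [Fintype n] [DecidableEq n] (Q A D : Matrix n n ℝ) :
    gaussianNLL Q (A + D) = gaussianNLL Q A + (Q⁻¹ * D).trace := by
  rw [gaussianNLL, gaussianNLL, Matrix.mul_add, trace_add, add_assoc]

namespace Matrix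

section RCLike

open scoped MatrixOrder ComplexOrder

variable {𝕜 n m : Type*} [RCLike 𝕜] [Fintype n] [DecidableEq n]

lemma PosDef.exists_posDef_mul_self_eq {A : Matrix n n 𝕜} (hA : A.PosDef) :
    ∃ S : Matrix n n 𝕜, S.PosDef ∧ S * S = A :=
  ⟨CFC.sqrt A, hA.isStrictlyPositive.sqrt.posDef, CFC.sqrt_mul_sqrt_self A hA.posSemidef.nonneg⟩

lemma IsHermitian.eq_one_of_eigenvalues_eq_one {A : Matrix n n 𝕜} (hA : A.IsHermitian)
    (h : ∀ i, hA.eigenvalues i = 1) : A = 1 :=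
  calc A = cfc id A := (cfc_id ℝ A hA.isSelfAdjoint).symm
    _ = cfc (fun _ ↦ (1 : ℝ)) A := cfc_congr <| by
        rw [hA.spectrum_real_eq_range_eigenvalues]
        rintro _ ⟨i, rfl⟩
        simp [h]
    _ = 1 := by rw [cfc_const (1 : ℝ) A hA.isSelfAdjoint, map_one]

lemma PosDef.exists_trace_mul_eq {B : Matrix n n 𝕜} (hB : B.PosDef) (D : Matrix n n 𝕜) :
    ∃ S : Matrix n n 𝕜, IsUnit S ∧ (B * D).trace = (Sᴴ * D * S).trace := by
  obtain ⟨S, hS, rfl⟩ := hB.exists_posDef_mul_self_eq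
  refine ⟨S, hS.isUnit, ?_⟩
  rw [hS.isHermitian.eq, trace_mul_cycle S D S]

lemma PosDef.trace_mul_nonneg {B D : Matrix n n 𝕜} (hB : B.PosDef) (hD : D.PosSemidef) :
    0 ≤ (B * D).trace := by
  obtain ⟨S, -, h⟩ := hB.exists_trace_mul_eq D
  exact h ▸ (hD.conjTranspose_mul_mul_same S).trace_nonneg

lemma PosDef.trace_mul_eq_zero_iff {B D : Matrix n n 𝕜} (hB : B.PosDef) (hD : D.PosSemidef) :
    (B * D).trace = 0 ↔ D = 0 := by
  obtain ⟨S, hS, h⟩ := hB.exists_trace_mul_eq D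
  have hS' : IsUnit Sᴴ := hS.star
  rw [h, (hD.conjTranspose_mul_mul_same S).trace_eq_zero_iff, hS.mul_left_eq_zero,
    hS'.mul_right_eq_zero]

lemma PosDef.mul_mul_conjTranspose_eq_zero_iff {S : Matrix n n 𝕜} (hS : S.PosDef)
    (N : Matrix m n 𝕜) : N * S * Nᴴ = 0 ↔ N = 0 := by
  obtain ⟨R, hR, rfl⟩ := hS.exists_posDef_mul_self_eq
  have : N * (R * R) * Nᴴ = (N * R) * (N * R)ᴴ := by
    rw [conjTranspose_mul, hR.isHermitian.eq, Matrix.mul_assoc, Matrix.mul_assoc, Matrix.mul_assoc]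
  rw [this, self_mul_conjTranspose_eq_zero]
  refine ⟨fun h ↦ ?_, fun h ↦ by simp [h]⟩
  rw [← mul_nonsing_inv_cancel_right R N ((isUnit_iff_isUnit_det R).mp hR.isUnit), h,
    Matrix.zero_mul]

end RCLike

section LogDet

variable {n : Type*} [Fintype n] [DecidableEq n]

lemma PosDef.trace_sub_log_det_eq_sum {X : Matrix n n ℝ} (hX : X.PosDef) :
    X.trace - Real.log X.det =
      ∑ i, (hX.isHermitian.eigenvalues i - Real.log (hX.isHermitian.eigenvalues i)) := by
  rw [hX.isHermitian.trace_eq_sum_eigenvalues, hX.isHermitian.det_eq_prod_eigenvalues]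
  simp only [RCLike.ofReal_real_eq_id, id]
  rw [Real.log_prod fun i _ ↦ (hX.eigenvalues_pos i).ne', Finset.sum_sub_distrib]

lemma PosDef.card_le_trace_sub_log_det {X : Matrix n n ℝ} (hX : X.PosDef) :
    (Fintype.card n : ℝ) ≤ X.trace - Real.log X.det := by
  rw [hX.trace_sub_log_det_eq_sum, Fintype.card_eq_sum_ones, Nat.cast_sum, Nat.cast_one]
  gcongr with i
  linarith [Real.log_le_sub_one_of_pos (hX.eigenvalues_pos i)]

lemma PosDef.trace_sub_log_det_eq_card_iff {X : Matrix n n ℝ} (hX : X.PosDef) :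
    X.trace - Real.log X.det = Fintype.card n ↔ X = 1 := by
  refine ⟨fun h ↦ hX.isHermitian.eq_one_of_eigenvalues_eq_one fun i ↦ ?_, fun h ↦ by simp [h]⟩
  set ev := hX.isHermitian.eigenvalues
  have hle : ∀ j ∈ Finset.univ, (1 : ℝ) ≤ ev j - Real.log (ev j) := fun j _ ↦ by
    linarith [Real.log_le_sub_one_of_pos (hX.eigenvalues_pos j)]
  rw [hX.trace_sub_log_det_eq_sum, Fintype.card_eq_sum_ones, Nat.cast_sum, Nat.cast_one] at h
  have hi := (Finset.sum_eq_sum_iff_of_le hle).mp h.symm i (Finset.mem_univ i)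
  by_contra hne
  linarith [Real.log_lt_sub_one_of_pos (hX.eigenvalues_pos i) hne]

end LogDet

section Moments

variable {R ι n m : Type*} [CommRing R] [Fintype ι] [Fintype m]

lemma dotProduct_mulVec_eq_trace_mul_vecMulVec (A : Matrix m m R) (x : m → R) :
    x ⬝ᵥ A *ᵥ x = (A * vecMulVec x x).trace := by
  rw [mul_vecMulVec, trace_vecMulVec, dotProduct_comm]

lemma sum_dotProduct_mulVec_eq_trace (A : Matrix m m R) (x : ι → m → R) :
    ∑ t, x t ⬝ᵥ A *ᵥ x t = (A * ∑ t, vecMulVec (x t) (x t)).trace := by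
  simp_rw [Matrix.mul_sum, trace_sum, dotProduct_mulVec_eq_trace_mul_vecMulVec]

lemma vecMulVec_sub_mulVec_self (a : n → R) (b : m → R) (Γ : Matrix n m R) :
    vecMulVec (a - Γ *ᵥ b) (a - Γ *ᵥ b) =
      vecMulVec a a - vecMulVec a b * Γᵀ - Γ * (vecMulVec a b)ᵀ + Γ * vecMulVec b b * Γᵀ := by
  rw [transpose_vecMulVec, vecMulVec_mul, mul_vecMulVec, Matrix.mul_assoc, vecMulVec_mul,
    mul_vecMulVec, ← mulVec_transpose, transpose_transpose, sub_vecMulVec, vecMulVec_sub,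
    vecMulVec_sub]
  abel

lemma sum_vecMulVec_sub_mulVec_self (x : ι → n → R) (y : ι → m → R) (Γ : Matrix n m R) :
    ∑ t, vecMulVec (x t - Γ *ᵥ y t) (x t - Γ *ᵥ y t) =
      ∑ t, vecMulVec (x t) (x t) - (∑ t, vecMulVec (x t) (y t)) * Γᵀ -
        Γ * (∑ t, vecMulVec (x t) (y t))ᵀ + Γ * (∑ t, vecMulVec (y t) (y t)) * Γᵀ := by
  simp only [vecMulVec_sub_mulVec_self, Finset.sum_add_distrib, Finset.sum_sub_distrib,
    Matrix.sum_mul, Matrix.mul_sum, transpose_sum]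

lemma complete_square [DecidableEq m] {S : Matrix m m R} (hS : S.IsSymm) (hS' : IsUnit S)
    (C : Matrix n n R) (B Γ : Matrix n m R) :
    C - B * Γᵀ - Γ * Bᵀ + Γ * S * Γᵀ =
      C - B * S⁻¹ * Bᵀ + (Γ - B * S⁻¹) * S * (Γ - B * S⁻¹)ᵀ := by
  have hdet := (isUnit_iff_isUnit_det S).mp hS'
  have h₁ : B * S⁻¹ * S = B := nonsing_inv_mul_cancel_right S B hdet
  have h₂ : S * (S⁻¹ * Bᵀ) = Bᵀ := mul_nonsing_inv_cancel_left S Bᵀ hdet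
  have h₃ : (B * S⁻¹)ᵀ = S⁻¹ * Bᵀ := by rw [transpose_mul, transpose_nonsing_inv, hS.eq]
  simp only [Matrix.sub_mul, Matrix.mul_sub, transpose_sub, h₁, Matrix.mul_assoc _ S, h₂, h₃,
    Matrix.mul_assoc B]
  abel

end Moments

end Matrix

namespace Matrix.PosDef

variable {n : Type*} [Fintype n] [DecidableEq n] {A Q D : Matrix n n ℝ}

lemma gaussianNLL_self (hA : A.PosDef) : gaussianNLL A A = Real.log A.det + Fintype.card n := by
  rw [gaussianNLL, nonsing_inv_mul A ((isUnit_iff_isUnit_det A).mp hA.isUnit), trace_one]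

lemma exists_posDef_trace_sub_log_det_eq (hA : A.PosDef) (hQ : Q.PosDef) :
    ∃ X : Matrix n n ℝ, X.PosDef ∧
      X.trace - Real.log X.det = gaussianNLL Q A - Real.log A.det ∧ (X = 1 ↔ Q = A) := by
  obtain ⟨S, hS, rfl⟩ := hA.exists_posDef_mul_self_eq
  have hQdet := (isUnit_iff_isUnit_det Q).mp hQ.isUnit
  refine ⟨S * Q⁻¹ * S, ?_, ?_, ?_⟩
  · simpa only [hS.isHermitian.eq] using
      hQ.inv.conjTranspose_mul_mul_same (mulVec_injective_iff_isUnit.mpr hS.isUnit)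
  · have hdet : (S * Q⁻¹ * S).det = (S * S).det / Q.det := by
      rw [det_mul, det_mul, det_mul, det_nonsing_inv, Ring.inverse_eq_inv']
      ring
    rw [gaussianNLL, trace_mul_cycle, trace_mul_comm, hdet,
      Real.log_div hA.det_pos.ne' hQ.det_pos.ne']
    ring
  · rw [Matrix.mul_assoc, mul_eq_one_comm, Matrix.mul_assoc]
    constructor
    · intro h
      rw [← inv_eq_right_inv h, nonsing_inv_nonsing_inv Q hQdet]
    · rintro rfl
      exact nonsing_inv_mul _ hQdet

lemma gaussianNLL_self_le (hA : A.PosDef) (hQ : Q.PosDef) :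
    gaussianNLL A A ≤ gaussianNLL Q A := by
  obtain ⟨X, hX, h, -⟩ := exists_posDef_trace_sub_log_det_eq hA hQ
  linarith [hX.card_le_trace_sub_log_det, hA.gaussianNLL_self]

lemma gaussianNLL_eq_self_iff (hA : A.PosDef) (hQ : Q.PosDef) :
    gaussianNLL Q A = gaussianNLL A A ↔ Q = A := by
  obtain ⟨X, hX, h, hX1⟩ := exists_posDef_trace_sub_log_det_eq hA hQ
  rw [← hX1, ← hX.trace_sub_log_det_eq_card_iff, h, hA.gaussianNLL_self]
  constructor <;> intro <;> linarith

lemma gaussianNLL_self_le_add (hA : A.PosDef) (hQ : Q.PosDef) (hD : D.PosSemidef) :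
    gaussianNLL A A ≤ gaussianNLL Q (A + D) := by
  rw [gaussianNLL_add]
  linarith [hA.gaussianNLL_self_le hQ, hQ.inv.trace_mul_nonneg hD]

lemma gaussianNLL_add_eq_self_iff (hA : A.PosDef) (hQ : Q.PosDef) (hD : D.PosSemidef) :
    gaussianNLL Q (A + D) = gaussianNLL A A ↔ Q = A ∧ D = 0 := by
  have h₁ := hA.gaussianNLL_self_le hQ
  have h₂ := hQ.inv.trace_mul_nonneg hD
  rw [gaussianNLL_add, ← hA.gaussianNLL_eq_self_iff hQ, ← hQ.inv.trace_mul_eq_zero_iff hD]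
  constructor
  · intro h
    constructor <;> linarith
  · rintro ⟨h, h'⟩
    linarith

end Matrix.PosDef

lemma penalized_objective_eq {T n m : ℕ} (hT : (T : ℝ) ≠ 0)
    (ζ : Fin T → Fin n → ℝ) (z : Fin T → Fin m → ℝ)
    (Phi : Matrix (Fin n) (Fin n) ℝ) (Psi : Matrix (Fin n) (Fin m) ℝ)
    (Sig : Matrix (Fin m) (Fin m) ℝ)
    (hPhi : Phi = (T : ℝ)⁻¹ • ∑ t, vecMulVec (ζ t) (ζ t))
    (hPsi : Psi = (T : ℝ)⁻¹ • ∑ t, vecMulVec (ζ t) (z t))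
    (hSig : Sig = (T : ℝ)⁻¹ • ∑ t, vecMulVec (z t) (z t))
    (P SigP : Matrix (Fin m) (Fin m) ℝ) (hSigP : SigP = Sig + (T : ℝ)⁻¹ • P)
    (hSigP_symm : SigP.IsSymm) (hSigP_unit : IsUnit SigP)
    (Γ : Matrix (Fin n) (Fin m) ℝ) (Q : Matrix (Fin n) (Fin n) ℝ) :
    -(T : ℝ) * Real.log Q.det - (∑ t, (ζ t - Γ *ᵥ z t) ⬝ᵥ (Q⁻¹ *ᵥ (ζ t - Γ *ᵥ z t))) -
        (Q⁻¹ * (Γ * P * Γᵀ)).trace =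
      -T * gaussianNLL Q (Phi - Psi * SigP⁻¹ * Psiᵀ +
        (Γ - Psi * SigP⁻¹) * SigP * (Γ - Psi * SigP⁻¹)ᵀ) := by
  rw [← complete_square hSigP_symm hSigP_unit, sum_dotProduct_mulVec_eq_trace,
    sum_vecMulVec_sub_mulVec_self, ← (eq_inv_smul_iff₀ hT).mp hPhi,
    ← (eq_inv_smul_iff₀ hT).mp hPsi, ← (eq_inv_smul_iff₀ hT).mp hSig]
  have hscatter : (T : ℝ) • Phi - ((T : ℝ) • Psi) * Γᵀ - Γ * ((T : ℝ) • Psi)ᵀ +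
      Γ * ((T : ℝ) • Sig) * Γᵀ + Γ * P * Γᵀ =
        (T : ℝ) • (Phi - Psi * Γᵀ - Γ * Psiᵀ + Γ * SigP * Γᵀ) := by
    simp only [hSigP, smul_add, smul_sub, Matrix.mul_add, Matrix.add_mul, Matrix.smul_mul,
      Matrix.mul_smul, transpose_smul, smul_smul, mul_inv_cancel₀ hT, one_smul, add_assoc]
  rw [sub_sub, ← trace_add, ← Matrix.mul_add, hscatter, Matrix.mul_smul, trace_smul, smul_eq_mul,
    gaussianNLL]
  ring

theorem stmt8_general {T n m : ℕ} (hT : 1 ≤ T)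
    (ζ : Fin T → Fin n → ℝ) (z : Fin T → Fin m → ℝ)
    (Phi : Matrix (Fin n) (Fin n) ℝ) (Psi : Matrix (Fin n) (Fin m) ℝ)
    (Sig : Matrix (Fin m) (Fin m) ℝ)
    (hPhi : Phi = ((T : ℝ))⁻¹ • ∑ t, vecMulVec (ζ t) (ζ t))
    (hPsi : Psi = ((T : ℝ))⁻¹ • ∑ t, vecMulVec (ζ t) (z t))
    (hSig : Sig = ((T : ℝ))⁻¹ • ∑ t, vecMulVec (z t) (z t))
    (P : Matrix (Fin m) (Fin m) ℝ)
    (SigP : Matrix (Fin m) (Fin m) ℝ) (hSigP : SigP = Sig + ((T : ℝ))⁻¹ • P)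
    (hSigPPD : SigP.PosDef)
    (PstarP : Matrix (Fin n) (Fin n) ℝ)
    (hPstarP : PstarP = Phi - Psi * SigP⁻¹ * Psiᵀ)
    (hPstarPPD : PstarP.PosDef)
    (LP : Matrix (Fin n) (Fin m) ℝ → Matrix (Fin n) (Fin n) ℝ → ℝ)
    (hLP : ∀ Γ Pm, LP Γ Pm = -(T : ℝ) * Real.log Pm.det -
      (∑ t, (ζ t - Γ *ᵥ z t) ⬝ᵥ (Pm⁻¹ *ᵥ (ζ t - Γ *ᵥ z t))) -
      (Pm⁻¹ * (Γ * P * Γᵀ)).trace) :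
    ∀ (Γ : Matrix (Fin n) (Fin m) ℝ) (Pm : Matrix (Fin n) (Fin n) ℝ),
      Pm.PosDef →
        LP Γ Pm ≤ LP (Psi * SigP⁻¹) PstarP ∧
        (LP Γ Pm = LP (Psi * SigP⁻¹) PstarP ↔
          (Γ = Psi * SigP⁻¹ ∧ Pm = PstarP)) := by
  intro Γ Pm hPm
  have hTpos : (0 : ℝ) < T := by exact_mod_cast hT
  have hobj : ∀ Γ Q, LP Γ Q = -T * gaussianNLL Q
      (PstarP + (Γ - Psi * SigP⁻¹) * SigP * (Γ - Psi * SigP⁻¹)ᵀ) := fun Γ Q ↦ by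
    rw [hLP, hPstarP]
    exact penalized_objective_eq hTpos.ne' ζ z Phi Psi Sig hPhi hPsi hSig P SigP hSigP
      hSigPPD.isHermitian hSigPPD.isUnit Γ Q
  have hD : ((Γ - Psi * SigP⁻¹) * SigP * (Γ - Psi * SigP⁻¹)ᵀ).PosSemidef :=
    hSigPPD.posSemidef.mul_mul_conjTranspose_same _
  have hΓ : (Γ - Psi * SigP⁻¹) * SigP * (Γ - Psi * SigP⁻¹)ᵀ = 0 ↔ Γ = Psi * SigP⁻¹ :=
    (hSigPPD.mul_mul_conjTranspose_eq_zero_iff _).trans sub_eq_zero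
  have hopt : LP (Psi * SigP⁻¹) PstarP = -T * gaussianNLL PstarP PstarP := by
    simpa using hobj (Psi * SigP⁻¹) PstarP
  rw [hobj, hopt, mul_le_mul_left_of_neg (neg_neg_of_pos hTpos),
    mul_right_inj' (neg_ne_zero.mpr hTpos.ne'), hPstarPPD.gaussianNLL_add_eq_self_iff hPm hD,
    hΓ]
  exact ⟨hPstarPPD.gaussianNLL_self_le_add hPm hD, and_comm⟩

/-- The full regularized M-step (equations 10a–10b). With sample
moments `Φ, Ψ, Σ`, prior precision `P` symmetric positive semidefinite,
`Σ_P = Σ + (1/T)P` positive definite and `Π_P* = Φ - Ψ Σ_P⁻¹ Ψᵀ` positive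
definite, the penalized objective
`L_P(Γ,Π) = -T log det Π - ∑_t (ζ_t - Γ z_t)ᵀ Π⁻¹ (ζ_t - Γ z_t) - tr(Π⁻¹ Γ P Γᵀ)`
over `Γ` and symmetric positive definite `Π` attains its maximum uniquely at
`Γ = Ψ Σ_P⁻¹` and `Π = Π_P*`. -/
theorem stmt8 {T n m : ℕ} (hT : 1 ≤ T)
    (ζ : Fin T → Fin n → ℝ) (z : Fin T → Fin m → ℝ)
    (Phi : Matrix (Fin n) (Fin n) ℝ) (Psi : Matrix (Fin n) (Fin m) ℝ)
    (Sig : Matrix (Fin m) (Fin m) ℝ)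
    (hPhi : Phi = ((T : ℝ))⁻¹ • ∑ t, vecMulVec (ζ t) (ζ t))
    (hPsi : Psi = ((T : ℝ))⁻¹ • ∑ t, vecMulVec (ζ t) (z t))
    (hSig : Sig = ((T : ℝ))⁻¹ • ∑ t, vecMulVec (z t) (z t))
    (P : Matrix (Fin m) (Fin m) ℝ) (hP : P.PosSemidef)
    (SigP : Matrix (Fin m) (Fin m) ℝ) (hSigP : SigP = Sig + ((T : ℝ))⁻¹ • P)
    (hSigPPD : SigP.PosDef)
    (PstarP : Matrix (Fin n) (Fin n) ℝ)
    (hPstarP : PstarP = Phi - Psi * SigP⁻¹ * Psiᵀ)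
    (hPstarPPD : PstarP.PosDef)
    (LP : Matrix (Fin n) (Fin m) ℝ → Matrix (Fin n) (Fin n) ℝ → ℝ)
    (hLP : ∀ Γ Pm, LP Γ Pm = -(T : ℝ) * Real.log Pm.det -
      (∑ t, (ζ t - Γ *ᵥ z t) ⬝ᵥ (Pm⁻¹ *ᵥ (ζ t - Γ *ᵥ z t))) -
      (Pm⁻¹ * (Γ * P * Γᵀ)).trace) :
    ∀ (Γ : Matrix (Fin n) (Fin m) ℝ) (Pm : Matrix (Fin n) (Fin n) ℝ),
      Pm.PosDef →
        LP Γ Pm ≤ LP (Psi * SigP⁻¹) PstarP ∧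
        (LP Γ Pm = LP (Psi * SigP⁻¹) PstarP ↔
          (Γ = Psi * SigP⁻¹ ∧ Pm = PstarP)) :=
  stmt8_general hT ζ z Phi Psi Sig hPhi hPsi hSig P SigP hSigP hSigPPD PstarP hPstarP hPstarPPD LP
    hLP
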